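/- Let p > 1 and α > -1 with α < β. Then the classical Hilbert series operator H(a)(m) = ∑_{n=1}^∞ a_n/(m+n) is NOT bounded from l^p_α to l^p_β: there is no constant C > 0 such that ‖Ha‖_{p,β} ≤ C‖a‖_{p,α} for all a ∈ l^p_α. -/

import Mathlib

/-!
Test the inequality on the sequence `a` equal to `(-1)^(k-j) C(k,j)` on the block
`[(j+1)N, (j+2)N)` for `j ≤ k` and to `0` elsewhere. Then `Ha(m)` is a sum of `N` forward
differences of order `k` and step `N` of `x ↦ 1/x`, which are explicit:
`Δ_N^k (1/x) = (-1)^k k! N^k / ∏_{j ≤ k} (x + jN)`. So `Ha(m)` decays like `m^{-(k+1)}`, which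
makes the `β`-weighted sum finite once `k ≥ β`, while `|Ha(m)|` stays above a constant
independent of `N` for `m < 2N`. Hence `‖Ha‖_{p,β}^p ≳ N^{β+1}`, whereas `‖a‖_{p,α}^p ≲ N^{α+1}`
since `a` lives on `[N, (k+2)N)`; as `N → ∞`, `‖Ha‖_{p,β} ≤ C ‖a‖_{p,α}` fails.
-/

open Finset
open scoped Nat

theorem fwdDiff_iter_inv {c y : ℝ} (hc : 0 ≤ c) (hy : 0 < y) (k : ℕ) :
    (fwdDiff c)^[k] (fun x : ℝ ↦ x⁻¹) y =
      (-1) ^ k * k ! * c ^ k / ∏ j ∈ range (k + 1), (y + j * c) := by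
  induction k generalizing y with
  | zero => simp
  | succ k ih =>
    have hyc : 0 < y + c := by positivity
    have hshift : (∏ j ∈ range (k + 1), (y + c + j * c)) * y =
        (∏ j ∈ range (k + 1), (y + j * c)) * (y + (k + 1) * c) := by
      calc (∏ j ∈ range (k + 1), (y + c + j * c)) * y
          = ∏ j ∈ range (k + 1 + 1), (y + j * c) := by
            rw [prod_range_succ' (fun j : ℕ ↦ y + j * c)]
            simp only [Nat.cast_add, Nat.cast_one, Nat.cast_zero, zero_mul, add_zero]
            exact congrArg (· * y) (prod_congr rfl fun j _ ↦ by ring)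
        _ = _ := by rw [prod_range_succ]; push_cast; rfl
    have hP : 0 < ∏ j ∈ range (k + 1), (y + j * c) := prod_pos fun j _ ↦ by positivity
    have hQ : 0 < ∏ j ∈ range (k + 1), (y + c + j * c) := prod_pos fun j _ ↦ by positivity
    rw [Function.iterate_succ_apply', fwdDiff, ih hyc, ih hy, prod_range_succ _ (k + 1),
      div_sub_div _ _ hQ.ne' hP.ne', div_eq_div_iff (by positivity) (by positivity)]
    push_cast [Nat.factorial_succ]
    linear_combination
      -((-1) ^ k * ↑k ! * c ^ k * (∏ j ∈ range (k + 1), (y + j * c))) * hshift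

theorem rpow_le_rpow_abs_mul_rpow {x y L γ : ℝ} (hy : 0 < y) (hyx : y ≤ x)
    (hxL : x ≤ L * y) : x ^ γ ≤ L ^ |γ| * y ^ γ := by
  have ht : 1 ≤ x / y := (one_le_div hy).mpr hyx
  have htL : x / y ≤ L := (div_le_iff₀ hy).mpr hxL
  calc x ^ γ = (x / y) ^ γ * y ^ γ := by
        rw [← Real.mul_rpow (by positivity) hy.le, div_mul_cancel₀ _ hy.ne']
    _ ≤ L ^ |γ| * y ^ γ := by
        gcongr
        exact (Real.rpow_le_rpow_of_exponent_le ht (le_abs_self γ)).trans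
          (Real.rpow_le_rpow (by positivity) htL (abs_nonneg γ))

theorem rpow_neg_abs_mul_rpow_le {x y L γ : ℝ} (hy : 0 < y) (hyx : y ≤ x)
    (hxL : x ≤ L * y) : L ^ (-|γ|) * y ^ γ ≤ x ^ γ := by
  have ht : 1 ≤ x / y := (one_le_div hy).mpr hyx
  have htL : x / y ≤ L := (div_le_iff₀ hy).mpr hxL
  calc L ^ (-|γ|) * y ^ γ ≤ (x / y) ^ γ * y ^ γ := by
        gcongr
        exact (Real.rpow_le_rpow_of_nonpos (by positivity) htL
          (neg_nonpos.mpr (abs_nonneg γ))).trans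
          (Real.rpow_le_rpow_of_exponent_le ht (neg_abs_le γ))
    _ = x ^ γ := by rw [← Real.mul_rpow (by positivity) hy.le, div_mul_cancel₀ _ hy.ne']

theorem le_rpow_mul_of_rpow_one_div_le {x y C p : ℝ} (hx : 0 ≤ x) (hy : 0 ≤ y) (hC : 0 ≤ C)
    (hp : 0 < p) (h : x ^ (1 / p) ≤ C * y ^ (1 / p)) : x ≤ C ^ p * y := by
  have := Real.rpow_le_rpow (by positivity) h hp.le
  rwa [← Real.rpow_mul hx, Real.mul_rpow hC (by positivity), ← Real.rpow_mul hy,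
    one_div_mul_cancel hp.ne', Real.rpow_one, Real.rpow_one] at this

/-- The Hilbert operator `H` with sequences indexed from `0`: `a n` stands for `a_{n+1}`. -/
noncomputable def hilbert (a : ℕ → ℝ) (m : ℕ) : ℝ := ∑' n, a n / ((m : ℝ) + n + 2)

noncomputable def weightedPowSum (γ p : ℝ) (a : ℕ → ℝ) : ℝ :=
  ∑' n : ℕ, ((n : ℝ) + 1) ^ γ * |a n| ^ p

noncomputable def testSeq (k N n : ℕ) : ℝ :=
  ∑ j ∈ range (k + 1),
    if n ∈ Ico ((j + 1) * N) ((j + 1) * N + N) then (((-1) ^ (k - j) * k.choose j : ℤ) : ℝ)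
    else 0

theorem testSeq_eq_zero_of_notMem {k N n : ℕ} (hn : n ∉ Ico N ((k + 2) * N)) :
    testSeq k N n = 0 :=
  sum_eq_zero fun j hj ↦ if_neg fun hnj ↦ hn <| by
    simp only [mem_Ico, mem_range] at hj hnj ⊢
    constructor <;> nlinarith

theorem abs_testSeq_le (k N n : ℕ) : |testSeq k N n| ≤ 2 ^ k :=
  calc |testSeq k N n| ≤ ∑ j ∈ range (k + 1), (k.choose j : ℝ) :=
        (abs_sum_le_sum_abs _ _).trans <| sum_le_sum fun j _ ↦ by split_ifs <;> simp
    _ = 2 ^ k := by exact_mod_cast k.sum_range_choose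

theorem hasSum_weighted_testSeq (γ : ℝ) {p : ℝ} (hp : p ≠ 0) (k N : ℕ) :
    HasSum (fun n : ℕ ↦ ((n : ℝ) + 1) ^ γ * |testSeq k N n| ^ p)
      (∑ n ∈ Ico N ((k + 2) * N), ((n : ℝ) + 1) ^ γ * |testSeq k N n| ^ p) :=
  hasSum_sum_of_ne_finset_zero fun n hn ↦ by
    rw [testSeq_eq_zero_of_notMem hn, abs_zero, Real.zero_rpow hp, mul_zero]

theorem weightedPowSum_testSeq_le (α : ℝ) {p : ℝ} (hp : 0 < p) (k : ℕ) {N : ℕ} (hN : 0 < N) :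
    weightedPowSum α p (testSeq k N) ≤
      (k + 1) * ((k : ℝ) + 2) ^ |α| * ((2 : ℝ) ^ k) ^ p * (N : ℝ) ^ (α + 1) := by
  have hN' : (0 : ℝ) < N := by exact_mod_cast hN
  rw [weightedPowSum, (hasSum_weighted_testSeq α hp.ne' k N).tsum_eq]
  calc _ ≤ ∑ _n ∈ Ico N ((k + 2) * N),
          ((k : ℝ) + 2) ^ |α| * (N : ℝ) ^ α * ((2 : ℝ) ^ k) ^ p := by
        refine sum_le_sum fun n hn ↦ ?_
        rw [mem_Ico] at hn
        have hn' : (N : ℝ) ≤ n ∧ (n : ℝ) + 1 ≤ (k + 2) * N :=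
          ⟨by exact_mod_cast hn.1, by exact_mod_cast hn.2⟩
        gcongr
        · exact rpow_le_rpow_abs_mul_rpow hN' (by linarith) hn'.2
        · exact abs_testSeq_le k N n
    _ = _ := by
        rw [sum_const, Nat.card_Ico,
          Nat.sub_eq_of_eq_add (by ring : (k + 2) * N = (k + 1) * N + N), nsmul_eq_mul,
          Real.rpow_add_one hN'.ne']
        push_cast
        ring

theorem hilbert_testSeq (k N m : ℕ) :
    hilbert (testSeq k N) m =
      ∑ i ∈ range N, (fwdDiff (N : ℝ))^[k] (fun x : ℝ ↦ x⁻¹) (m + N + i + 2) := by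
  set w : ℕ → ℝ := fun j ↦ (((-1) ^ (k - j) * k.choose j : ℤ) : ℝ)
  have hblock : ∀ j, HasSum
      (fun n : ℕ ↦ if n ∈ Ico ((j + 1) * N) ((j + 1) * N + N) then w j / ((m : ℝ) + n + 2)
        else 0)
      (∑ i ∈ range N, w j / ((m : ℝ) + ((j + 1) * N + i : ℕ) + 2)) := by
    intro j
    have := hasSum_sum_of_ne_finset_zero (L := .unconditional ℕ)
      (f := fun n : ℕ ↦
        if n ∈ Ico ((j + 1) * N) ((j + 1) * N + N) then w j / ((m : ℝ) + n + 2) else 0)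
      fun n hn ↦ if_neg hn
    rwa [sum_ite_mem, inter_self, sum_Ico_eq_sum_range, add_tsub_cancel_left] at this
  rw [hilbert, (tsum_congr fun n ↦ ?_).trans (hasSum_sum fun j _ ↦ hblock j).tsum_eq,
    sum_comm]
  · refine sum_congr rfl fun i _ ↦ ?_
    rw [fwdDiff_iter_eq_sum_shift]
    refine sum_congr rfl fun j _ ↦ ?_
    simp only [w, zsmul_eq_mul, nsmul_eq_mul, div_eq_mul_inv]
    push_cast
    ring_nf
  · simp only [testSeq, sum_div, ite_div, zero_div]
    rfl

theorem abs_hilbert_testSeq (k N m : ℕ) :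
    |hilbert (testSeq k N) m| =
      ∑ i ∈ range N,
        k ! * (N : ℝ) ^ k / ∏ j ∈ range (k + 1), ((m + N + i + 2 : ℝ) + j * N) := by
  rw [hilbert_testSeq,
    sum_congr rfl fun i _ ↦ fwdDiff_iter_inv (Nat.cast_nonneg N) (by positivity) k]
  simp only [mul_assoc, mul_div_assoc, ← mul_sum, abs_mul, abs_pow, abs_neg, abs_one, one_pow,
    one_mul]
  rw [Nat.abs_cast, abs_of_nonneg (by positivity)]

theorem abs_hilbert_testSeq_le (k N m : ℕ) :
    |hilbert (testSeq k N) m| ≤ k ! * (N : ℝ) ^ (k + 1) / ((m : ℝ) + 1) ^ (k + 1) := by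
  rw [abs_hilbert_testSeq]
  calc _ ≤ ∑ _i ∈ range N, k ! * (N : ℝ) ^ k / ((m : ℝ) + 1) ^ (k + 1) := by
        refine sum_le_sum fun i _ ↦
          div_le_div_of_nonneg_left (by positivity) (by positivity) ?_
        rw [← card_range (k + 1), ← prod_const, card_range]
        refine prod_le_prod (fun _ _ ↦ by positivity) fun j _ ↦ ?_
        have : (0 : ℝ) ≤ j * N := by positivity
        linarith [(Nat.cast_nonneg N : (0 : ℝ) ≤ N), (Nat.cast_nonneg i : (0 : ℝ) ≤ i)]
    _ = _ := by rw [sum_const, card_range, nsmul_eq_mul]; ring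

theorem le_abs_hilbert_testSeq (k : ℕ) {N m : ℕ} (hN : 0 < N) (hm : m < 2 * N) :
    k ! / ((k : ℝ) + 4) ^ (k + 1) ≤ |hilbert (testSeq k N) m| := by
  have hN' : (0 : ℝ) < N := by exact_mod_cast hN
  rw [abs_hilbert_testSeq]
  calc _ = ∑ _i ∈ range N, k ! * (N : ℝ) ^ k / (((k : ℝ) + 4) * N) ^ (k + 1) := by
        rw [sum_const, card_range, nsmul_eq_mul, mul_pow, pow_succ _ k]
        field_simp
        ring
    _ ≤ _ := by
        refine sum_le_sum fun i hi ↦ div_le_div_of_nonneg_left (by positivity)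
          (prod_pos fun _ _ ↦ by positivity) ?_
        rw [← card_range (k + 1), ← prod_const, card_range]
        refine prod_le_prod (fun _ _ ↦ by positivity) fun j hj ↦ ?_
        have hm' : (m : ℝ) + 1 ≤ 2 * N := by exact_mod_cast hm
        have hi' : (i : ℝ) + 1 ≤ N := by exact_mod_cast mem_range.mp hi
        have hj' : (j : ℝ) ≤ k := by exact_mod_cast Nat.lt_succ_iff.mp (mem_range.mp hj)
        nlinarith

theorem summable_weighted_hilbert_testSeq {β p : ℝ} (hp : 0 < p) {k : ℕ}
    (hk : β + 1 < (k + 1) * p) (N : ℕ) :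
    Summable fun m : ℕ ↦ ((m : ℝ) + 1) ^ β * |hilbert (testSeq k N) m| ^ p := by
  have hdecay : Summable fun m : ℕ ↦ ((m : ℝ) + 1) ^ (β - (k + 1) * p) := by
    simpa using (summable_nat_add_iff 1).mpr
      (Real.summable_nat_rpow.mpr (by linarith : β - (k + 1) * p < -1))
  refine .of_nonneg_of_le (fun m ↦ by positivity) (fun m ↦ ?_)
    (hdecay.mul_left ((k ! * (N : ℝ) ^ (k + 1)) ^ p))
  have hm : (0 : ℝ) < m + 1 := by positivity
  calc _ ≤ ((m : ℝ) + 1) ^ β * (k ! * (N : ℝ) ^ (k + 1) / ((m : ℝ) + 1) ^ (k + 1)) ^ p := by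
        gcongr
        exact abs_hilbert_testSeq_le k N m
    _ = _ := by
        rw [Real.div_rpow (by positivity) (by positivity), ← Real.rpow_natCast ((m : ℝ) + 1),
          ← Real.rpow_mul hm.le, Real.rpow_sub hm]
        push_cast
        ring

theorem le_weightedPowSum_hilbert_testSeq {β p : ℝ} (hp : 0 < p) {k N : ℕ}
    (hk : β + 1 < (k + 1) * p) (hN : 0 < N) :
    2 ^ (-|β|) * ((k ! : ℝ) / ((k : ℝ) + 4) ^ (k + 1)) ^ p * (N : ℝ) ^ (β + 1) ≤
      weightedPowSum β p (hilbert (testSeq k N)) := by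
  have hN' : (0 : ℝ) < N := by exact_mod_cast hN
  calc _ = ∑ _m ∈ Ico N (2 * N),
          2 ^ (-|β|) * (N : ℝ) ^ β * ((k ! : ℝ) / ((k : ℝ) + 4) ^ (k + 1)) ^ p := by
        rw [sum_const, Nat.card_Ico, two_mul, Nat.add_sub_cancel, nsmul_eq_mul,
          Real.rpow_add_one hN'.ne']
        ring
    _ ≤ ∑ m ∈ Ico N (2 * N), ((m : ℝ) + 1) ^ β * |hilbert (testSeq k N) m| ^ p := by
        refine sum_le_sum fun m hm ↦ ?_
        rw [mem_Ico] at hm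
        have hm' : (N : ℝ) ≤ m ∧ (m : ℝ) + 1 ≤ 2 * N :=
          ⟨by exact_mod_cast hm.1, by exact_mod_cast hm.2⟩
        gcongr
        · exact rpow_neg_abs_mul_rpow_le hN' (by linarith) hm'.2
        · exact le_abs_hilbert_testSeq k hN hm.2
    _ ≤ _ :=
        (summable_weighted_hilbert_testSeq hp hk N).sum_le_tsum _ fun m _ ↦ by positivity

theorem stmt_8_general (p α β : ℝ) (hp : 1 < p) (hαβ : α < β) :
    ¬ ∃ C : ℝ, 0 < C ∧ ∀ a : ℕ → ℝ,
      Summable (fun n : ℕ => ((n : ℝ) + 1) ^ α * |a n| ^ p) →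
      (∑' m : ℕ, ((m : ℝ) + 1) ^ β *
          |∑' n : ℕ, a n / ((m : ℝ) + (n : ℝ) + 2)| ^ p) ^ (1/p)
        ≤ C * (∑' n : ℕ, ((n : ℝ) + 1) ^ α * |a n| ^ p) ^ (1/p) := by
  rintro ⟨C, hC, hbd⟩
  have hp0 : 0 < p := by linarith
  set k := ⌈β⌉₊
  have hk : β + 1 < (k + 1) * p := by nlinarith [Nat.le_ceil β]
  set cH : ℝ := 2 ^ (-|β|) * ((k ! : ℝ) / ((k : ℝ) + 4) ^ (k + 1)) ^ p
  set CA : ℝ := (k + 1) * ((k : ℝ) + 2) ^ |α| * ((2 : ℝ) ^ k) ^ p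
  have hlim := (tendsto_rpow_atTop (sub_pos.mpr hαβ)).comp tendsto_natCast_atTop_atTop
  obtain ⟨N, hNlarge, hN⟩ :=
    ((hlim.eventually_gt_atTop (C ^ p * CA / cH)).and (Filter.eventually_gt_atTop 0)).exists
  have hN' : (0 : ℝ) < N := by exact_mod_cast hN
  have hbound : cH * (N : ℝ) ^ (β + 1) ≤ C ^ p * (CA * (N : ℝ) ^ (α + 1)) :=
    calc cH * (N : ℝ) ^ (β + 1) ≤ weightedPowSum β p (hilbert (testSeq k N)) :=
          le_weightedPowSum_hilbert_testSeq hp0 hk hN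
      _ ≤ C ^ p * weightedPowSum α p (testSeq k N) :=
          le_rpow_mul_of_rpow_one_div_le (tsum_nonneg fun _ ↦ by positivity)
            (tsum_nonneg fun _ ↦ by positivity) hC.le hp0
            (hbd _ (hasSum_weighted_testSeq α hp0.ne' k N).summable)
      _ ≤ C ^ p * (CA * (N : ℝ) ^ (α + 1)) := by
          gcongr
          exact weightedPowSum_testSeq_le α hp0 k hN
  rw [show β + 1 = (β - α) + (α + 1) by ring, Real.rpow_add hN'] at hbound
  rw [Function.comp_apply, div_lt_iff₀ (by positivity)] at hNlarge
  nlinarith [Real.rpow_pos_of_pos hN' (α + 1)]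

theorem stmt_8 (p α β : ℝ) (hp : 1 < p) (hα : -1 < α) (hαβ : α < β) :
    ¬ ∃ C : ℝ, 0 < C ∧ ∀ a : ℕ → ℝ,
      Summable (fun n : ℕ => ((n : ℝ) + 1) ^ α * |a n| ^ p) →
      (∑' m : ℕ, ((m : ℝ) + 1) ^ β *
          |∑' n : ℕ, a n / ((m : ℝ) + (n : ℝ) + 2)| ^ p) ^ (1/p)
        ≤ C * (∑' n : ℕ, ((n : ℝ) + 1) ^ α * |a n| ^ p) ^ (1/p) :=
  stmt_8_general p α β hp hαβ
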